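/- Let D be a design of strength R−1 (R ≥ 2) with n ≥ R factors, each factor given a normalized orthogonal coding, and assume that for every R-element set U of factors and every c ∈ U the Gram matrices of the column-centered main-effects model matrix of c and of the column-centered nonconstant columns of the full model matrix of U ∖ {c} are invertible. Then GR_ind(D) ≤ GR(D). -/

import Mathlib

open Finset Matrix

/-- A design `D` (rows = runs, coordinates = factors) has strength `t` if in every
projection onto `t` factors every level combination occurs equally often. -/
def hasStrength {N n : ℕ} (s : Fin n → ℕ) (D : Fin N → ∀ i, Fin (s i)) (t : ℕ) : Prop :=
  ∀ T : Finset (Fin n), T.card = t → ∀ x : ∀ i, Fin (s i),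
    (Finset.univ.filter fun r => ∀ i ∈ T, D r i = x i).card = N / ∏ i ∈ T, s i

/-- Normalized orthogonal coding: contrast columns have zero sum and
`Cᵀ C = m • 1` (squared length `m`, pairwise orthogonal). -/
def isNOC {m : ℕ} (C : Fin m → Fin (m - 1) → ℝ) : Prop :=
  (∀ j, ∑ l, C l j = 0) ∧
    ∀ j j', ∑ l, C l j * C l j' = if j = j' then (m : ℝ) else 0

/-- Column (indexed by the tuple `j`) of the interaction model matrix of the set `U`
of factors, evaluated at run `r`. -/
def intCol {N n : ℕ} {s : Fin n → ℕ} (C : ∀ i, Fin (s i) → Fin (s i - 1) → ℝ)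
    (D : Fin N → ∀ i, Fin (s i)) (U : Finset (Fin n))
    (j : ∀ i : U, Fin (s i.1 - 1)) (r : Fin N) : ℝ :=
  ∏ i : U, C i.1 (D r i.1) (j i)

/-- Projection frequency `a_k(U)`: sum of squared column sums of the interaction
model matrix of `U`, divided by `N²`. -/
noncomputable def projFreq {N n : ℕ} {s : Fin n → ℕ}
    (C : ∀ i, Fin (s i) → Fin (s i - 1) → ℝ)
    (D : Fin N → ∀ i, Fin (s i)) (U : Finset (Fin n)) : ℝ :=
  (∑ j : ∀ i : U, Fin (s i.1 - 1), (∑ r, intCol C D U j r) ^ 2) / (N : ℝ) ^ 2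

/-- Generalized resolution `GR = R + 1 - sqrt(max_U a_R(U)/(min_{i∈U} s i - 1))`,
the max running over all `R`-element sets of factors. -/
noncomputable def GR {N n : ℕ} {s : Fin n → ℕ} (R : ℕ)
    (C : ∀ i, Fin (s i) → Fin (s i - 1) → ℝ) (D : Fin N → ∀ i, Fin (s i)) : ℝ :=
  (R : ℝ) + 1 - Real.sqrt (sSup {v : ℝ | ∃ U : Finset (Fin n), U.card = R ∧
    v = projFreq C D U / (((sInf (s '' (U : Set (Fin n))) : ℕ) : ℝ) - 1)})

/-- Column-centering of a matrix with `N` rows. -/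
noncomputable def center {N : ℕ} {κ : Type*} (M : Matrix (Fin N) κ ℝ) :
    Matrix (Fin N) κ ℝ :=
  Matrix.of fun r k => M r k - (∑ r', M r' k) / (N : ℝ)

/-- Index type for the nonconstant columns of the full model matrix of `Cset`:
one column for each tuple of contrasts of each nonempty subset of `Cset`. -/
abbrev FullIdx {n : ℕ} (s : Fin n → ℕ) (Cset : Finset (Fin n)) : Type :=
  Σ S : {S : Finset (Fin n) // S ⊆ Cset ∧ S.Nonempty}, ∀ i : S.1, Fin (s i.1 - 1)

/-- Column-centered main-effects model matrix of factor `c` (coding `B`). -/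
noncomputable def Ymat {N n : ℕ} {s : Fin n → ℕ} (B : ∀ i, Fin (s i) → Fin (s i - 1) → ℝ)
    (D : Fin N → ∀ i, Fin (s i)) (c : Fin n) : Matrix (Fin N) (Fin (s c - 1)) ℝ :=
  center (Matrix.of fun r j => B c (D r c) j)

/-- Column-centered nonconstant columns of the full model matrix of `Cset` (coding `B`). -/
noncomputable def Xmat {N n : ℕ} {s : Fin n → ℕ} (B : ∀ i, Fin (s i) → Fin (s i - 1) → ℝ)
    (D : Fin N → ∀ i, Fin (s i)) (Cset : Finset (Fin n)) :
    Matrix (Fin N) (FullIdx s Cset) ℝ :=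
  center (Matrix.of fun r k => intCol B D k.1.1 k.2 r)

/-- Largest eigenvalue of a square real matrix. -/
noncomputable def maxEig {κ : Type*} [Fintype κ] (Q : Matrix κ κ ℝ) : ℝ :=
  sSup {μ : ℝ | ∃ v : κ → ℝ, v ≠ 0 ∧ Q.mulVec v = μ • v}

/-- Largest canonical correlation `r₁(Y_c; X_Cset)`: square root of the largest
eigenvalue of `S_yy⁻¹ S_yx S_xx⁻¹ S_xy`. -/
noncomputable def r1 {N n : ℕ} {s : Fin n → ℕ} (B : ∀ i, Fin (s i) → Fin (s i - 1) → ℝ)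
    (D : Fin N → ∀ i, Fin (s i)) (c : Fin n) (Cset : Finset (Fin n)) : ℝ :=
  Real.sqrt (maxEig
    (((Ymat B D c)ᵀ * Ymat B D c)⁻¹ * ((Ymat B D c)ᵀ * Xmat B D Cset) *
      ((Xmat B D Cset)ᵀ * Xmat B D Cset)⁻¹ * ((Xmat B D Cset)ᵀ * Ymat B D c)))

/-- `GR_ind = R + 1 -` the largest canonical correlation between any factor's
main effects and the full model in the other `R-1` factors of any `R`-factor projection. -/
noncomputable def GRind {N n : ℕ} {s : Fin n → ℕ} (R : ℕ)
    (C : ∀ i, Fin (s i) → Fin (s i - 1) → ℝ) (D : Fin N → ∀ i, Fin (s i)) : ℝ :=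
  (R : ℝ) + 1 - sSup {ρ : ℝ | ∃ U : Finset (Fin n), U.card = R ∧
    ∃ c ∈ U, ρ = r1 C D c (U.erase c)}

/-! Strength `R - 1` makes the full model matrix of any `R - 1` factors orthogonal: each of its
columns (the constant one included) is a product of per-factor contrast columns, and summing such
a product over the runs factorizes into per-factor sums over the levels, which the orthogonal
coding evaluates. So the centering is trivial and both Gram matrices are `N • 1`.

Fix an `R`-set `U` and a factor `c ∈ U` with the fewest levels. Then the canonical-correlation
matrix is `N⁻² M Mᵀ` with `M = Y_cᵀ X_{U \ c}`, and every column sum of the interaction matrix of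
`U` is a distinct entry of `M`. Hence `a_R(U) ≤ tr (N⁻² M Mᵀ) ≤ (s c - 1) r₁²`, as the largest
eigenvalue is at least the mean of the `s c - 1` eigenvalues. -/

section Eigenvalues

variable {κ : Type*} [Fintype κ] [DecidableEq κ]

lemma le_maxEig {Q : Matrix κ κ ℝ} {μ : ℝ} {v : κ → ℝ} (hv : v ≠ 0) (hQv : Q *ᵥ v = μ • v) :
    μ ≤ maxEig Q := by
  refine le_csSup ((Module.End.finite_hasEigenvalue (Matrix.toLin' Q)).subset ?_).bddAbove
    ⟨v, hv, hQv⟩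
  rintro μ ⟨v, hv, hQv⟩
  exact Module.End.hasEigenvalue_of_hasEigenvector ⟨Module.End.mem_eigenspace_iff.mpr hQv, hv⟩

lemma trace_div_card_le_maxEig [Nonempty κ] {Q : Matrix κ κ ℝ} (hQ : Q.IsHermitian) :
    Q.trace / Fintype.card κ ≤ maxEig Q := by
  obtain ⟨i, -, hi⟩ := Finset.exists_le_of_sum_le univ_nonempty
    (f := fun _ => Q.trace / Fintype.card κ) (g := hQ.eigenvalues)
    (by simp [hQ.trace_eq_sum_eigenvalues, mul_div_cancel₀])
  refine hi.trans (le_maxEig ?_ (hQ.mulVec_eigenvectorBasis i))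
  exact fun h => hQ.eigenvectorBasis.orthonormal.ne_zero i (by ext k; exact congrFun h k)

end Eigenvalues

lemma Matrix.inv_smul_one {κ K : Type*} [Fintype κ] [DecidableEq κ] [Field K] (a : K) :
    (a • (1 : Matrix κ κ K))⁻¹ = a⁻¹ • 1 := by
  rcases eq_or_ne a 0 with rfl | ha
  · simp
  · exact Matrix.inv_eq_right_inv (by simp [smul_smul, ha])

lemma Matrix.trace_mul_transpose {m p R : Type*} [Fintype m] [Fintype p] [CommSemiring R]
    (M : Matrix p m R) :
    (M * Mᵀ).trace = ∑ i, ∑ k, M i k ^ 2 := by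
  simp [Matrix.trace, Matrix.mul_apply, sq]

lemma sum_sq_div_le_maxEig {m p q : Type*} [Fintype m] [Fintype p] [Fintype q] [DecidableEq p]
    [DecidableEq q] [Nonempty p] {Y : Matrix m p ℝ} {X : Matrix m q ℝ} {a : ℝ}
    (hY : Yᵀ * Y = a • 1) (hX : Xᵀ * X = a • 1) :
    (∑ i, ∑ k, (Yᵀ * X) i k ^ 2) / (a ^ 2 * Fintype.card p) ≤
      maxEig ((Yᵀ * Y)⁻¹ * (Yᵀ * X) * (Xᵀ * X)⁻¹ * (Xᵀ * Y)) := by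
  set M := Yᵀ * X
  have hQ : (Yᵀ * Y)⁻¹ * M * (Xᵀ * X)⁻¹ * (Xᵀ * Y) = (a ^ 2)⁻¹ • (M * Mᵀ) := by
    rw [hY, hX, show Xᵀ * Y = Mᵀ by simp [M, Matrix.transpose_mul], Matrix.inv_smul_one,
      Matrix.inv_smul_one]
    simp [smul_smul, sq]
  have hherm : ((a ^ 2)⁻¹ • (M * Mᵀ)).IsHermitian := by
    simpa using (Matrix.isHermitian_mul_conjTranspose_self M).smul (IsSelfAdjoint.all (a ^ 2)⁻¹)
  rw [hQ]
  convert trace_div_card_le_maxEig hherm using 1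
  rw [Matrix.trace_smul, Matrix.trace_mul_transpose, smul_eq_mul]
  field_simp

section Orthogonality

variable {N n : ℕ} {s : Fin n → ℕ} {C : ∀ i, Fin (s i) → Fin (s i - 1) → ℝ}
  {D : Fin N → ∀ i, Fin (s i)} {t : ℕ} {S S' T : Finset (Fin n)}

def intColFactor (C : ∀ i, Fin (s i) → Fin (s i - 1) → ℝ) (S : Finset (Fin n))
    (j : ∀ i : S, Fin (s i.1 - 1)) (i : Fin n) (l : Fin (s i)) : ℝ :=
  if h : i ∈ S then C i l (j ⟨i, h⟩) else 1

lemma intCol_eq_prod_intColFactor (hST : S ⊆ T) (j : ∀ i : S, Fin (s i.1 - 1)) (r : Fin N) :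
    intCol C D S j r = ∏ i ∈ T, intColFactor C S j i (D r i) := by
  rw [← prod_subset hST fun i _ hi => show intColFactor C S j i (D r i) = 1 from dif_neg hi,
    ← prod_coe_sort S, intCol]
  exact prod_congr rfl fun i _ => by simp [intColFactor]

lemma sum_intColFactor_sq (hC : ∀ i, isNOC (C i)) (j : ∀ i : S, Fin (s i.1 - 1)) (i : Fin n) :
    ∑ l, intColFactor C S j i l ^ 2 = s i := by
  by_cases hi : i ∈ S
  · simpa [intColFactor, hi, sq] using (hC i).2 (j ⟨i, hi⟩) (j ⟨i, hi⟩)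
  · simp [intColFactor, hi]

lemma exists_sum_intColFactor_mul_eq_zero (hC : ∀ i, isNOC (C i)) (hS : S ⊆ T) (hS' : S' ⊆ T)
    {j : ∀ i : S, Fin (s i.1 - 1)} {j' : ∀ i : S', Fin (s i.1 - 1)}
    (hne : (⟨S, j⟩ : Σ S : Finset (Fin n), ∀ i : S, Fin (s i.1 - 1)) ≠ ⟨S', j'⟩) :
    ∃ i ∈ T, ∑ l, intColFactor C S j i l * intColFactor C S' j' i l = 0 := by
  by_cases hSS : S = S'
  · subst hSS
    obtain ⟨i, hi⟩ := Function.ne_iff.mp fun h : j = j' => hne (h ▸ rfl)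
    refine ⟨i, hS i.2, ?_⟩
    simpa [intColFactor, hi] using (hC i).2 (j i) (j' i)
  · by_cases h : S ⊆ S'
    · obtain ⟨i, hi', hi⟩ := not_subset.mp fun h' => hSS (h.antisymm h')
      refine ⟨i, hS' hi', ?_⟩
      simpa [intColFactor, hi, hi'] using (hC i).1 (j' ⟨i, hi'⟩)
    · obtain ⟨i, hi, hi'⟩ := not_subset.mp h
      refine ⟨i, hS hi, ?_⟩
      simpa [intColFactor, hi, hi'] using (hC i).1 (j ⟨i, hi⟩)

end Orthogonality

namespace hasStrength

variable {N n : ℕ} {s : Fin n → ℕ} {C : ∀ i, Fin (s i) → Fin (s i - 1) → ℝ}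
  {D : Fin N → ∀ i, Fin (s i)} {t : ℕ} {S S' T : Finset (Fin n)}

lemma card_restrict_eq (hD : hasStrength s D t) (hT : T.card = t) (y : ∀ i : T, Fin (s i)) :
    #{r | (fun i : T => D r i) = y} = N / ∏ i ∈ T, s i := by
  rcases Nat.eq_zero_or_pos N with rfl | hN
  · simp
  let x : ∀ i, Fin (s i) := fun i => if h : i ∈ T then y ⟨i, h⟩ else D ⟨0, hN⟩ i
  rw [← hD T hT x]
  congr 1
  ext r
  simp only [mem_filter, mem_univ, true_and, funext_iff, Subtype.forall]
  exact forall₂_congr fun i hi => by simp only [x, dif_pos hi]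

lemma sum_prod (hD : hasStrength s D t) (hT : T.card = t) (f : ∀ i, Fin (s i) → ℝ) :
    ∑ r, ∏ i ∈ T, f i (D r i) = (N / ∏ i ∈ T, s i : ℕ) * ∏ i ∈ T, ∑ l, f i l := by
  have hfiber (y : ∀ i : T, Fin (s i)) :
      ∑ r with (fun i : T => D r i) = y, ∏ i ∈ T, f i (D r i) =
        (N / ∏ i ∈ T, s i : ℕ) * ∏ i : T, f i (y i) := by
    rw [← hD.card_restrict_eq hT y, ← nsmul_eq_mul, ← sum_const]
    refine sum_congr rfl fun r hr => ?_
    rw [← (mem_filter.mp hr).2, ← prod_coe_sort]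
  rw [← sum_fiberwise univ (fun r (i : T) => D r i), sum_congr rfl fun y _ => hfiber y,
    ← mul_sum, ← Fintype.prod_sum, prod_coe_sort T (fun i => ∑ l, f i l)]

lemma cast_div_mul_prod (hD : hasStrength s D t) (hT : T.card = t) :
    ((N / ∏ i ∈ T, s i : ℕ) : ℝ) * ∏ i ∈ T, (s i : ℝ) = N := by
  simpa using (hD.sum_prod hT fun _ _ => 1).symm

lemma sum_prod_eq_zero (hD : hasStrength s D t) (hT : T.card = t) (f : ∀ i, Fin (s i) → ℝ)
    {i : Fin n} (hi : i ∈ T) (h0 : ∑ l, f i l = 0) : ∑ r, ∏ i ∈ T, f i (D r i) = 0 := by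
  rw [hD.sum_prod hT]
  exact mul_eq_zero_of_right _ (prod_eq_zero hi h0)

lemma sum_comp (hD : hasStrength s D t) (hT : T.card = t) {c : Fin n} (hc : c ∈ T)
    (g : Fin (s c) → ℝ) : ∑ r, g (D r c) = N / s c * ∑ l, g l := by
  rcases (s c).eq_zero_or_pos with hsc | hsc
  · obtain rfl : N = 0 := Nat.eq_zero_of_not_pos fun hN => (Fin.pos (D ⟨0, hN⟩ c)).ne' hsc
    simp
  let f := Function.update (fun i (_ : Fin (s i)) => (1 : ℝ)) c g
  have hf (r : Fin N) : ∏ i ∈ T, f i (D r i) = g (D r c) := by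
    rw [prod_eq_single_of_mem c hc fun i _ hi => by simp [f, hi]]
    simp [f]
  have hfsum : ∏ i ∈ T, ∑ l, f i l = (∑ l, g l) * ∏ i ∈ T.erase c, (s i : ℝ) := by
    rw [← mul_prod_erase T _ hc]
    congr 1
    · simp [f]
    · exact prod_congr rfl fun i hi => by simp [f, ne_of_mem_erase hi]
  rw [div_mul_eq_mul_div, eq_div_iff (by positivity), ← sum_congr rfl fun r _ => hf r,
    hD.sum_prod hT, hfsum, ← hD.cast_div_mul_prod hT, ← mul_prod_erase T (fun i => (s i : ℝ)) hc]
  ring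

lemma sum_intCol_sq (hC : ∀ i, isNOC (C i)) (hD : hasStrength s D t) (hT : T.card = t)
    (hS : S ⊆ T) (j : ∀ i : S, Fin (s i.1 - 1)) : ∑ r, intCol C D S j r ^ 2 = N := by
  simp only [intCol_eq_prod_intColFactor hS, ← prod_pow]
  rw [hD.sum_prod hT fun i l => intColFactor C S j i l ^ 2]
  simp only [sum_intColFactor_sq hC]
  exact hD.cast_div_mul_prod hT

lemma sum_intCol_mul_eq_zero (hC : ∀ i, isNOC (C i)) (hD : hasStrength s D t)
    (hT : T.card = t) (hS : S ⊆ T) (hS' : S' ⊆ T)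
    {j : ∀ i : S, Fin (s i.1 - 1)} {j' : ∀ i : S', Fin (s i.1 - 1)}
    (hne : (⟨S, j⟩ : Σ S : Finset (Fin n), ∀ i : S, Fin (s i.1 - 1)) ≠ ⟨S', j'⟩) :
    ∑ r, intCol C D S j r * intCol C D S' j' r = 0 := by
  obtain ⟨i, hi, h0⟩ := exists_sum_intColFactor_mul_eq_zero hC hS hS' hne
  simp only [intCol_eq_prod_intColFactor hS, intCol_eq_prod_intColFactor hS', ← prod_mul_distrib]
  exact hD.sum_prod_eq_zero hT (fun i l => intColFactor C S j i l * intColFactor C S' j' i l) hi h0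

lemma sum_intCol_eq_zero (hC : ∀ i, isNOC (C i)) (hD : hasStrength s D t) (hT : T.card = t)
    (hS : S ⊆ T) (hSne : S.Nonempty) (j : ∀ i : S, Fin (s i.1 - 1)) :
    ∑ r, intCol C D S j r = 0 := by
  have hne : (⟨S, j⟩ : Σ S : Finset (Fin n), ∀ i : S, Fin (s i.1 - 1)) ≠ ⟨∅, isEmptyElim⟩ :=
    fun h => hSne.ne_empty (congrArg Sigma.fst h)
  simpa [intCol] using hD.sum_intCol_mul_eq_zero hC hT hS (empty_subset T) hne

end hasStrength

lemma center_of_sum_eq_zero {N : ℕ} {κ : Type*} {M : Matrix (Fin N) κ ℝ}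
    (h : ∀ k, ∑ r, M r k = 0) : center M = M := by
  ext r k
  simp [center, h k]

section Gram

variable {N n : ℕ} {s : Fin n → ℕ} {C : ∀ i, Fin (s i) → Fin (s i - 1) → ℝ}
  {D : Fin N → ∀ i, Fin (s i)} {t : ℕ} {T : Finset (Fin n)}

lemma Ymat_eq (hC : ∀ i, isNOC (C i)) (hD : hasStrength s D t) (hT : T.card = t) {c : Fin n}
    (hc : c ∈ T) : Ymat C D c = Matrix.of fun r j => C c (D r c) j :=
  center_of_sum_eq_zero fun j => by
    simp only [of_apply]
    rw [hD.sum_comp hT hc fun l => C c l j, (hC c).1 j, mul_zero]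

lemma Ymat_gram (hC : ∀ i, isNOC (C i)) (hD : hasStrength s D t) (hT : T.card = t) {c : Fin n}
    (hc : c ∈ T) : (Ymat C D c)ᵀ * Ymat C D c = (N : ℝ) • 1 := by
  ext j j'
  have hsc : (s c : ℝ) ≠ 0 := Nat.cast_ne_zero.mpr (by have := j.pos; omega)
  simp only [Ymat_eq hC hD hT hc, mul_apply, transpose_apply, of_apply]
  rw [hD.sum_comp hT hc fun l => C c l j * C c l j', (hC c).2 j j']
  by_cases hjj : j = j' <;> simp [hjj, hsc]

lemma Xmat_eq (hC : ∀ i, isNOC (C i)) (hD : hasStrength s D t) (hT : T.card = t) :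
    Xmat C D T = Matrix.of fun r (k : FullIdx s T) => intCol C D k.1.1 k.2 r :=
  center_of_sum_eq_zero fun k => hD.sum_intCol_eq_zero hC hT k.1.2.1 k.1.2.2 k.2

lemma Xmat_gram (hC : ∀ i, isNOC (C i)) (hD : hasStrength s D t) (hT : T.card = t) :
    (Xmat C D T)ᵀ * Xmat C D T = (N : ℝ) • 1 := by
  ext k k'
  simp only [Xmat_eq hC hD hT, mul_apply, transpose_apply, of_apply]
  by_cases hkk : k = k'
  · subst hkk
    simpa [sq] using hD.sum_intCol_sq hC hT k.1.2.1 k.2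
  · have hne : (⟨k.1.1, k.2⟩ : Σ S : Finset (Fin n), ∀ i : S, Fin (s i.1 - 1)) ≠ ⟨k'.1.1, k'.2⟩ :=
      fun h => hkk (Sigma.ext (Subtype.ext (congrArg Sigma.fst h)) (Sigma.ext_iff.mp h).2)
    simpa [hkk] using hD.sum_intCol_mul_eq_zero hC hT k.1.2.1 k'.1.2.1 hne

end Gram

section Bound

variable {N n : ℕ} {s : Fin n → ℕ} {C : ∀ i, Fin (s i) → Fin (s i - 1) → ℝ}
  {D : Fin N → ∀ i, Fin (s i)} {U : Finset (Fin n)} {c : Fin n}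

lemma intCol_eq_mul_intCol_erase (hc : c ∈ U) (j : ∀ i : U, Fin (s i.1 - 1)) (r : Fin N) :
    intCol C D U j r =
      C c (D r c) (j ⟨c, hc⟩) *
        intCol C D (U.erase c) (fun i => j ⟨i, mem_of_mem_erase i.2⟩) r := by
  rw [intCol_eq_prod_intColFactor subset_rfl, intCol_eq_prod_intColFactor subset_rfl,
    ← mul_prod_erase U _ hc]
  congr 1
  · simp [intColFactor, hc]
  · exact prod_congr rfl fun i hi => by simp [intColFactor, hi, mem_of_mem_erase hi]

/-- Each column sum of the interaction matrix of `U` is an entry of `Y₀ᵀ X₀` (main effects of `c`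
against the full model of `U.erase c`), and distinct columns give distinct entries. -/
lemma projFreq_le_sum_sq_div (hc : c ∈ U) (hU : (U.erase c).Nonempty) :
    projFreq C D U ≤ (∑ jc, ∑ k, ((Matrix.of fun r j => C c (D r c) j)ᵀ *
      Matrix.of fun r (k : FullIdx s (U.erase c)) => intCol C D k.1.1 k.2 r) jc k ^ 2) / N ^ 2 := by
  set M := (Matrix.of fun r j => C c (D r c) j)ᵀ *
    Matrix.of fun r (k : FullIdx s (U.erase c)) => intCol C D k.1.1 k.2 r
  let φ : (∀ i : U, Fin (s i.1 - 1)) → Fin (s c - 1) × FullIdx s (U.erase c) := fun j =>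
    (j ⟨c, hc⟩, ⟨⟨U.erase c, subset_rfl, hU⟩, fun i => j ⟨i, mem_of_mem_erase i.2⟩⟩)
  have hφ : Function.Injective φ := by
    intro j j' h
    have hrest := congrFun (eq_of_heq (Sigma.ext_iff.mp (Prod.ext_iff.mp h).2).2)
    funext i
    by_cases hic : i.1 = c
    · exact (Subtype.ext hic : i = ⟨c, hc⟩) ▸ (Prod.ext_iff.mp h).1
    · exact hrest ⟨i, mem_erase.mpr ⟨hic, i.2⟩⟩
  have hcol (j : ∀ i : U, Fin (s i.1 - 1)) : ∑ r, intCol C D U j r = M (φ j).1 (φ j).2 := by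
    simp only [M, φ, mul_apply, transpose_apply, of_apply, intCol_eq_mul_intCol_erase hc]
  rw [projFreq]
  refine div_le_div_of_nonneg_right ?_ (sq_nonneg _)
  calc ∑ j, (∑ r, intCol C D U j r) ^ 2 = ∑ p ∈ univ.image φ, M p.1 p.2 ^ 2 := by
        rw [sum_image fun j _ j' _ h => hφ h]
        simp only [hcol]
    _ ≤ ∑ p : Fin (s c - 1) × FullIdx s (U.erase c), M p.1 p.2 ^ 2 :=
        sum_le_univ_sum_of_nonneg fun _ => sq_nonneg _
    _ = ∑ jc, ∑ k, M jc k ^ 2 := Fintype.sum_prod_type _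

lemma projFreq_div_le_r1_sq {t : ℕ} (hC : ∀ i, isNOC (C i)) (hD : hasStrength s D t) (ht : 1 ≤ t)
    (hU : U.card = t + 1) (hc : c ∈ U) (hsc : 2 ≤ s c) :
    projFreq C D U / (s c - 1) ≤ r1 C D c (U.erase c) ^ 2 := by
  have hcard {x : Fin n} (hx : x ∈ U) : (U.erase x).card = t := by
    rw [card_erase_of_mem hx, hU, Nat.add_sub_cancel]
  obtain ⟨d, hd⟩ : (U.erase c).Nonempty := card_pos.mp (by rw [hcard hc]; omega)
  have hcd : c ∈ U.erase d := mem_erase.mpr ⟨(ne_of_mem_erase hd).symm, hc⟩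
  have : Nonempty (Fin (s c - 1)) := ⟨⟨0, by omega⟩⟩
  have hdim : ((Fintype.card (Fin (s c - 1)) : ℕ) : ℝ) = s c - 1 := by
    rw [Fintype.card_fin, Nat.cast_sub (by omega), Nat.cast_one]
  calc projFreq C D U / (s c - 1)
      ≤ (∑ jc, ∑ k, ((Ymat C D c)ᵀ * Xmat C D (U.erase c)) jc k ^ 2) /
          ((N : ℝ) ^ 2 * Fintype.card (Fin (s c - 1))) := by
        rw [Ymat_eq hC hD (hcard (mem_of_mem_erase hd)) hcd, Xmat_eq hC hD (hcard hc), hdim,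
          ← div_div]
        exact div_le_div_of_nonneg_right (projFreq_le_sum_sq_div hc ⟨d, hd⟩) (by linarith)
    _ ≤ _ := sum_sq_div_le_maxEig (Ymat_gram hC hD (hcard (mem_of_mem_erase hd)) hcd)
          (Xmat_gram hC hD (hcard hc))
    _ ≤ r1 C D c (U.erase c) ^ 2 := by
        rw [r1, Real.sq_sqrt']
        exact le_max_left _ _

end Bound

lemma Real.sqrt_sSup_le_sSup {V P : Set ℝ} (hP : BddAbove P) (hP₀ : ∀ ρ ∈ P, 0 ≤ ρ)
    (h : ∀ v ∈ V, ∃ ρ ∈ P, v ≤ ρ ^ 2) : √(sSup V) ≤ sSup P := by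
  rw [← Real.sqrt_sq (Real.sSup_nonneg hP₀)]
  refine Real.sqrt_le_sqrt (Real.sSup_le (fun v hv => ?_) (sq_nonneg _))
  obtain ⟨ρ, hρ, hvρ⟩ := h v hv
  exact hvρ.trans (pow_le_pow_left₀ (hP₀ ρ hρ) (le_csSup hP hρ) 2)

theorem statement7_general {N n R : ℕ} (hR : 2 ≤ R)
    {s : Fin n → ℕ} (hs : ∀ i, 2 ≤ s i)
    (D : Fin N → ∀ i, Fin (s i)) (hD : hasStrength s D (R - 1))
    (C : ∀ i, Fin (s i) → Fin (s i - 1) → ℝ) (hC : ∀ i, isNOC (C i)) :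
    GRind R C D ≤ GR R C D := by
  rw [GRind, GR]
  refine sub_le_sub_left (Real.sqrt_sSup_le_sSup ?_ ?_ ?_) _
  · refine (Set.finite_range fun p : Finset (Fin n) × Fin n => r1 C D p.2 (p.1.erase p.2)).subset
      ?_ |>.bddAbove
    rintro _ ⟨U, -, c, -, rfl⟩
    exact ⟨(U, c), rfl⟩
  · rintro _ ⟨U, -, c, -, rfl⟩
    exact Real.sqrt_nonneg _
  · rintro _ ⟨U, hU, rfl⟩
    obtain ⟨c, hc, hsc⟩ := Nat.sInf_mem ((card_pos.mp (by omega : 0 < U.card)).to_set.image s)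
    exact ⟨_, ⟨U, hU, c, hc, rfl⟩,
      hsc ▸ projFreq_div_le_r1_sq hC hD (by omega) (by omega : U.card = R - 1 + 1) hc (hs c)⟩

/-- `GR_ind(D) ≤ GR(D)` for a strength `R-1` design with normalized
orthogonal codings, provided all the relevant Gram matrices are invertible. -/
theorem statement7 {N n R : ℕ} (hN : 1 ≤ N) (hR : 2 ≤ R) (hn : R ≤ n)
    {s : Fin n → ℕ} (hs : ∀ i, 2 ≤ s i)
    (D : Fin N → ∀ i, Fin (s i)) (hD : hasStrength s D (R - 1))
    (C : ∀ i, Fin (s i) → Fin (s i - 1) → ℝ) (hC : ∀ i, isNOC (C i))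
    (hGram : ∀ U : Finset (Fin n), U.card = R → ∀ c ∈ U,
      IsUnit ((Ymat C D c)ᵀ * Ymat C D c).det ∧
      IsUnit ((Xmat C D (U.erase c))ᵀ * Xmat C D (U.erase c)).det) :
    GRind R C D ≤ GR R C D :=
  statement7_general hR hs D hD C hC
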